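/- For every real C > 0 and every ε > 0 there exists an integer D such that for every odd integer k ≥ 3, every integer d ≥ D and every integer ℓ with 0 ≤ ℓ ≤ C·√d and ℓ ≤ d, setting n = (2d+1)k − 1, one has |e_ℓ − e_0·exp(−kℓ²/(d(k−1)))| ≤ ε·e_0·exp(−kℓ²/(d(k−1))). (That is, e_ℓ ∼ e_0·exp(−kℓ²/(d(k−1))) for ℓ = O(√d) as n → ∞ with k = o(n).) -/

import Mathlib

/-- `e_ℓ = C(n/2, d-ℓ)·C(n/2, d+ℓ)` (sizes of the classes of `2d`-sets). -/
def ee (n d ℓ : ℕ) : ℕ := (n / 2).choose (d - ℓ) * (n / 2).choose (d + ℓ)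

/-- `e*_ℓ = C(n/2, d-ℓ)·C(n/2, d+1+ℓ)` (sizes of the classes of `(2d+1)`-sets). -/
def es (n d ℓ : ℕ) : ℕ := (n / 2).choose (d - ℓ) * (n / 2).choose (d + 1 + ℓ)

/-!
Write `n / 2 = d + b` with `b = (2d + 1)q`, where `k = 2q + 1`. Consecutive terms satisfy
`e_{j+1} / e_j = (d - j)/(d + j + 1) · (b - j)/(b + j + 1)`, and each factor is
`exp (-(2j + 1)/a + O((j + 1)²/a²))` for `a = d, b`. Telescoping gives
`log (e_ℓ / e_0) = -ℓ² (1/d + 1/b) + O(ℓ³/d²)`, and `ℓ² (1/d + 1/b)` differs from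
`kℓ²/(d(k - 1)) = ℓ²/d + ℓ²/(2dq)` by `O(ℓ²/d²)`. For `ℓ ≤ C √d` both errors are
`O(1/√d)`.
-/

open Real Finset Filter Topology

lemma Real.abs_log_one_sub_add_le {x : ℝ} (hx : |x| ≤ 1 / 2) :
    |log (1 - x) + x| ≤ 2 * x ^ 2 := by
  have h := abs_log_sub_add_sum_range_le (x := x) (by linarith) 1
  simp only [range_one, sum_singleton, zero_add, pow_one, Nat.cast_zero, div_one] at h
  calc |log (1 - x) + x| = |x + log (1 - x)| := by rw [add_comm]
    _ ≤ |x| ^ 2 / (1 - |x|) := h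
    _ ≤ 2 * x ^ 2 := by
      rw [div_le_iff₀ (by linarith), sq_abs]
      nlinarith [sq_nonneg x]

lemma Real.abs_log_div_add_le {a x : ℝ} (hx : 0 ≤ x) (ha : 2 * (x + 1) ≤ a) :
    |log ((a - x) / (a + x + 1)) + (2 * x + 1) / a| ≤ 4 * (x + 1) ^ 2 / a ^ 2 := by
  have ha0 : 0 < a := by linarith
  set u := x / a
  set v := (x + 1) / a
  have hu : |u| ≤ 1 / 2 := by
    rw [abs_of_nonneg (by positivity), div_le_iff₀ ha0]; linarith
  have hv : |-v| ≤ 1 / 2 := by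
    rw [abs_neg, abs_of_nonneg (by positivity), div_le_iff₀ ha0]; linarith
  have hratio : (a - x) / (a + x + 1) = (1 - u) / (1 - -v) := by
    have : a + x + 1 ≠ 0 := by linarith
    simp only [u, v, sub_neg_eq_add]; field_simp; ring
  have hlog : log ((a - x) / (a + x + 1)) + (2 * x + 1) / a
      = (log (1 - u) + u) - (log (1 - -v) + -v) := by
    rw [hratio, log_div (by linarith [le_abs_self u]) (by linarith [le_abs_self (-v)])]
    simp only [u, v]; field_simp; ring
  have huv : u ^ 2 ≤ v ^ 2 := by
    simp only [u, v]; gcongr; linarith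
  calc |log ((a - x) / (a + x + 1)) + (2 * x + 1) / a|
      ≤ |log (1 - u) + u| + |log (1 - -v) + -v| := by rw [hlog]; exact abs_sub _ _
    _ ≤ 2 * u ^ 2 + 2 * (-v) ^ 2 :=
      add_le_add (abs_log_one_sub_add_le hu) (abs_log_one_sub_add_le hv)
    _ ≤ 4 * (x + 1) ^ 2 / a ^ 2 := by
      have : 4 * (x + 1) ^ 2 / a ^ 2 = 4 * v ^ 2 := by simp only [v]; ring
      rw [neg_sq, this]; linarith

lemma Real.abs_sub_le_of_abs_log_sub_le {x y δ : ℝ} (hx : 0 < x) (hy : 0 < y)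
    (h : |log x - log y| ≤ δ) (hδ : δ ≤ 1) : |x - y| ≤ 2 * δ * y := by
  have hxy : x - y = y * (exp (log x - log y) - 1) := by
    rw [exp_sub, exp_log hx, exp_log hy]; field_simp
  calc |x - y| = y * |exp (log x - log y) - 1| := by rw [hxy, abs_mul, abs_of_pos hy]
    _ ≤ y * (2 * δ) := by
        gcongr
        exact (abs_exp_sub_one_le (h.trans hδ)).trans (by linarith)
    _ = 2 * δ * y := by ring

section ee

variable {n d b j ℓ : ℕ}

lemma ee_succ_mul (hb : n / 2 = d + b) (hj : j < d) :
    ee n d (j + 1) * ((d + j + 1) * (b + j + 1)) = ee n d j * ((d - j) * (b - j)) := by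
  have hup := Nat.choose_succ_right_eq (n / 2) (d + j)
  have hdown := Nat.choose_succ_right_eq (n / 2) (d - (j + 1))
  rw [show d - (j + 1) + 1 = d - j by omega, show n / 2 - (d - (j + 1)) = b + j + 1 by omega]
    at hdown
  rw [show n / 2 - (d + j) = b - j by omega] at hup
  unfold ee
  calc (n / 2).choose (d - (j + 1)) * (n / 2).choose (d + (j + 1)) * ((d + j + 1) * (b + j + 1))
      = ((n / 2).choose (d - (j + 1)) * (b + j + 1))
          * ((n / 2).choose (d + j + 1) * (d + j + 1)) := by
        rw [← add_assoc]; ring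
    _ = ((n / 2).choose (d - j) * (d - j)) * ((n / 2).choose (d + j) * (b - j)) := by
        rw [hdown, hup]
    _ = _ := by ring

lemma ee_pos (hb : n / 2 = d + b) (hjd : j ≤ d) (hjb : j ≤ b) : 0 < ee n d j :=
  Nat.mul_pos (Nat.choose_pos (by omega)) (Nat.choose_pos (by omega))

lemma log_ee_succ (hb : n / 2 = d + b) (hjd : j < d) (hjb : j < b) :
    log (ee n d (j + 1)) = log (ee n d j) + log ((d - j) / (d + j + 1))
      + log ((b - j) / (b + j + 1)) := by
  have hpos := ee_pos hb hjd.le hjb.le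
  have hrec : (ee n d (j + 1) : ℝ)
      = ee n d j * (((d - j) / (d + j + 1)) * ((b - j) / (b + j + 1))) := by
    have := congrArg (Nat.cast (R := ℝ)) (ee_succ_mul hb hjd)
    push_cast [Nat.cast_sub hjd.le, Nat.cast_sub hjb.le] at this
    field_simp
    linear_combination this
  have hd : (0 : ℝ) < (d - j) / (d + j + 1) :=
    div_pos (by rw [sub_pos]; exact_mod_cast hjd) (by positivity)
  have hb : (0 : ℝ) < (b - j) / (b + j + 1) :=
    div_pos (by rw [sub_pos]; exact_mod_cast hjb) (by positivity)
  rw [hrec, log_mul (by positivity) (by positivity), log_mul hd.ne' hb.ne']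
  ring

lemma abs_log_ee_sub_log_ee_zero_le (hb : n / 2 = d + b) (hℓd : 2 * ℓ ≤ d)
    (hℓb : 2 * ℓ ≤ b) :
    |log (ee n d ℓ) - log (ee n d 0) + (ℓ : ℝ) ^ 2 * (1 / d + 1 / b)|
      ≤ 4 * (ℓ : ℝ) ^ 3 * (1 / d ^ 2 + 1 / b ^ 2) := by
  induction ℓ with
  | zero => simp
  | succ j ih =>
    have hstep (a : ℕ) (ha : 2 * (j + 1) ≤ a) :=
      abs_log_div_add_le (a := a) (x := j) (Nat.cast_nonneg j) (by exact_mod_cast ha)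
    have hd := hstep d hℓd
    have hb' := hstep b hℓb
    have hj := ih (by omega) (by omega)
    rw [log_ee_succ hb (by omega) (by omega)]
    push_cast
    set S := (1 : ℝ) / d ^ 2 + 1 / b ^ 2
    calc _ = |(log (ee n d j) - log (ee n d 0) + j ^ 2 * (1 / d + 1 / b))
          + (log ((d - j) / (d + j + 1)) + (2 * j + 1) / d)
          + (log ((b - j) / (b + j + 1)) + (2 * j + 1) / b)| := by ring_nf
      _ ≤ 4 * j ^ 3 * S + 4 * (j + 1) ^ 2 / d ^ 2 + 4 * (j + 1) ^ 2 / b ^ 2 :=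
        (abs_add_three _ _ _).trans (add_le_add (add_le_add hj hd) hb')
      _ = 4 * (j ^ 3 + (j + 1) ^ 2) * S := by ring
      _ ≤ 4 * (j + 1) ^ 3 * S := by gcongr; nlinarith [(Nat.cast_nonneg j : (0 : ℝ) ≤ j)]

end ee

lemma abs_div_sub_sq_mul_le {d q x : ℝ} (hd : 0 < d) (hq : 1 ≤ q) :
    |(2 * q + 1) * x ^ 2 / (d * (2 * q + 1 - 1)) - x ^ 2 * (1 / d + 1 / ((2 * d + 1) * q))|
      ≤ x ^ 2 / (4 * d ^ 2) := by
  have hgap : (2 * q + 1) * x ^ 2 / (d * (2 * q + 1 - 1))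
      - x ^ 2 * (1 / d + 1 / ((2 * d + 1) * q)) = x ^ 2 / (2 * d * q * (2 * d + 1)) := by
    field_simp; ring
  rw [hgap, abs_of_nonneg (by positivity)]
  apply div_le_div_of_nonneg_left (sq_nonneg x) (by positivity)
  nlinarith

lemma add_pow_div_sq_le_of_le_mul_sqrt {x y C : ℝ} (hy : 1 ≤ y) (hx : 0 ≤ x)
    (hxC : x ≤ C * √y) :
    (x ^ 2 / 4 + 8 * x ^ 3) / y ^ 2 ≤ (C ^ 2 / 4 + 8 * C ^ 3) / √y := by
  have hs : 1 ≤ √y := one_le_sqrt.2 hy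
  have hsy : √y ^ 2 = y := sq_sqrt (by linarith)
  have hx2 : x ^ 2 ≤ C ^ 2 * √y ^ 3 := calc
    x ^ 2 ≤ (C * √y) ^ 2 := by gcongr
    _ = C ^ 2 * √y ^ 2 := by ring
    _ ≤ C ^ 2 * √y ^ 3 := by gcongr; norm_num
  have hx3 : x ^ 3 ≤ C ^ 3 * √y ^ 3 := calc
    x ^ 3 ≤ (C * √y) ^ 3 := by gcongr
    _ = C ^ 3 * √y ^ 3 := by ring
  have hy2 : y ^ 2 = √y ^ 3 * √y := by
    conv_lhs => rw [← hsy]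
    ring
  rw [hy2, div_le_div_iff₀ (by positivity) (by positivity)]
  nlinarith

lemma half_odd_mul_odd_sub_one {d q : ℕ} :
    ((2 * d + 1) * (2 * q + 1) - 1) / 2 = d + (2 * d + 1) * q := by
  have : (2 * d + 1) * (2 * q + 1) = 2 * (d + (2 * d + 1) * q) + 1 := by ring
  omega

lemma abs_ee_sub_gaussian_le {k d ℓ : ℕ} (hk : Odd k) (hk3 : 3 ≤ k) (hd : 0 < d)
    (hℓ : 2 * ℓ ≤ d) (hδ : ((ℓ : ℝ) ^ 2 / 4 + 8 * ℓ ^ 3) / d ^ 2 ≤ 1) :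
    |(ee ((2 * d + 1) * k - 1) d ℓ : ℝ)
        - ee ((2 * d + 1) * k - 1) d 0 * exp (-(k * ℓ ^ 2) / (d * (k - 1)))|
      ≤ 2 * ((ℓ ^ 2 / 4 + 8 * ℓ ^ 3) / d ^ 2) *
        (ee ((2 * d + 1) * k - 1) d 0 * exp (-(k * ℓ ^ 2) / (d * (k - 1)))) := by
  obtain ⟨q, rfl⟩ := hk
  have hq : 1 ≤ q := by omega
  have hb := half_odd_mul_odd_sub_one (d := d) (q := q)
  have hdb : d ≤ (2 * d + 1) * q := le_trans (by omega) (Nat.mul_le_mul_left _ hq)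
  have hdR : (0 : ℝ) < d := by exact_mod_cast hd
  have hdbR : (d : ℝ) ≤ (2 * d + 1) * q := by exact_mod_cast hdb
  have he0 := ee_pos hb (Nat.zero_le d) (Nat.zero_le _)
  refine abs_sub_le_of_abs_log_sub_le (by exact_mod_cast ee_pos hb (by omega) (by omega))
    (by positivity) ?_ hδ
  have hbinom := abs_log_ee_sub_log_ee_zero_le hb hℓ (hℓ.trans hdb)
  have hexp := abs_div_sub_sq_mul_le (x := ℓ) hdR (q := q) (by exact_mod_cast hq)
  rw [log_mul (by positivity) (exp_pos _).ne', log_exp]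
  push_cast at hbinom hexp ⊢
  set b : ℝ := (2 * d + 1) * q
  set n := (2 * d + 1) * (2 * q + 1) - 1
  calc _ = |(log (ee n d ℓ) - log (ee n d 0) + ℓ ^ 2 * (1 / d + 1 / b))
        + ((2 * q + 1) * ℓ ^ 2 / (d * (2 * q + 1 - 1)) - ℓ ^ 2 * (1 / d + 1 / b))| := by
        ring_nf
    _ ≤ 4 * ℓ ^ 3 * (1 / d ^ 2 + 1 / b ^ 2) + ℓ ^ 2 / (4 * d ^ 2) :=
        (abs_add_le _ _).trans (add_le_add hbinom hexp)
    _ ≤ 4 * ℓ ^ 3 * (1 / d ^ 2 + 1 / d ^ 2) + ℓ ^ 2 / (4 * d ^ 2) := by gcongr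
    _ = _ := by ring

theorem ee_gaussian_asymptotic_k_sub_one_general (C ε : ℝ) (hε : 0 < ε) :
    ∃ D : ℕ, ∀ k d ℓ : ℕ, Odd k → 3 ≤ k → D ≤ d →
      (ℓ : ℝ) ≤ C * Real.sqrt d → ℓ ≤ d →
      |(ee ((2 * d + 1) * k - 1) d ℓ : ℝ) -
          (ee ((2 * d + 1) * k - 1) d 0 : ℝ) *
            Real.exp (-((k : ℝ) * (ℓ : ℝ) ^ 2) / ((d : ℝ) * ((k : ℝ) - 1)))| ≤
        ε * ((ee ((2 * d + 1) * k - 1) d 0 : ℝ) *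
          Real.exp (-((k : ℝ) * (ℓ : ℝ) ^ 2) / ((d : ℝ) * ((k : ℝ) - 1)))) := by
  set K := C ^ 2 / 4 + 8 * C ^ 3
  have hsqrt : Tendsto (fun d : ℕ => √(d : ℝ)) atTop atTop :=
    tendsto_sqrt_atTop.comp tendsto_natCast_atTop_atTop
  have hsmall : ∀ᶠ d : ℕ in atTop, K / √(d : ℝ) ≤ min 1 (ε / 2) :=
    (tendsto_const_nhds.div_atTop hsqrt).eventually (eventually_le_nhds (by positivity))
  obtain ⟨D, hD⟩ := eventually_atTop.1 ((eventually_ge_atTop 1).and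
    ((hsqrt.eventually_ge_atTop (2 * C)).and hsmall))
  refine ⟨D, ?_⟩
  rintro k d ℓ hk hk3 hDd hℓC -
  obtain ⟨hd, hCd, hKd⟩ := hD d hDd
  have hdR : (1 : ℝ) ≤ d := by exact_mod_cast hd
  have hℓ : 2 * ℓ ≤ d := by
    have : 2 * (ℓ : ℝ) ≤ d := calc
      2 * (ℓ : ℝ) ≤ 2 * C * √d := by linarith
      _ ≤ √d * √d := by gcongr
      _ = d := mul_self_sqrt (by positivity)
    exact_mod_cast this
  have herr := add_pow_div_sq_le_of_le_mul_sqrt hdR (Nat.cast_nonneg ℓ) hℓC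
  refine (abs_ee_sub_gaussian_le hk hk3 hd hℓ
    ((herr.trans hKd).trans (min_le_left _ _))).trans ?_
  gcongr
  linarith [herr.trans hKd, min_le_right 1 (ε / 2)]

/-- Lemma 15(b): `e_ℓ ∼ e_0·exp(-kℓ²/(d(k-1)))` for `ℓ = O(√d)` as
`n = (2d+1)k - 1 → ∞`. -/
theorem ee_gaussian_asymptotic_k_sub_one (C ε : ℝ) (hC : 0 < C) (hε : 0 < ε) :
    ∃ D : ℕ, ∀ k d ℓ : ℕ, Odd k → 3 ≤ k → D ≤ d →
      (ℓ : ℝ) ≤ C * Real.sqrt d → ℓ ≤ d →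
      |(ee ((2 * d + 1) * k - 1) d ℓ : ℝ) -
          (ee ((2 * d + 1) * k - 1) d 0 : ℝ) *
            Real.exp (-((k : ℝ) * (ℓ : ℝ) ^ 2) / ((d : ℝ) * ((k : ℝ) - 1)))| ≤
        ε * ((ee ((2 * d + 1) * k - 1) d 0 : ℝ) *
          Real.exp (-((k : ℝ) * (ℓ : ℝ) ^ 2) / ((d : ℝ) * ((k : ℝ) - 1)))) :=
  ee_gaussian_asymptotic_k_sub_one_general C ε hε
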